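/- arXiv:1406.3223 — 2 statements merged into one kernel-verified Lean document; each statement's English description precedes it below -/
import Mathlib

section
/- Suppose S ∩ H = ∅. The pair graph G(G,H,S) is connected if and only if ⟨H ∩ S·S⁻¹⟩ = H and S contains a representative of every right coset of H in G other than H itself. -/
open scoped Pointwise Classical

def pairGraph {G : Type*} [Group G] (H : Subgroup G) (S : Set G) : SimpleGraph G :=
  SimpleGraph.fromRel (fun x y => ∃ h ∈ (H : Set G), ∃ s ∈ S, x = h ∧ y = h * s)

/-!
Write `K = ⟨H ∩ S S⁻¹⟩ ≤ H`. Left multiplication by elements of `H` is an automorphism of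
the pair graph, and a generator `s t⁻¹` of `K` is joined to `1` by the path `1 — s — s t⁻¹`;
hence `K` lies in the component of `1`. If `K = H`, every `x ∉ H` with `x s⁻¹ ∈ H` for some
`s ∈ S` is adjacent to `x s⁻¹`, so the graph is connected.

Conversely, since `S` misses `H`, the set `K ∪ K S` is closed under adjacency: the only
nontrivial step goes from `k t` back into `H` along some `s ∈ S`, and lands on
`k (t s⁻¹) ∈ K`. If the graph is connected, `K ∪ K S` is everything; as `K S` misses `H`,
this gives `H = K` and a representative in `S` for every coset other than `H`.
-/

theorem SimpleGraph.Reachable.of_adj_imp {V : Type*} {Γ : SimpleGraph V} {P : V → Prop}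
    (hP : ∀ ⦃x y⦄, Γ.Adj x y → P x → P y) {u v : V} (huv : Γ.Reachable u v) (hu : P u) :
    P v := by
  rw [reachable_iff_reflTransGen] at huv
  induction huv with
  | refl => exact hu
  | tail _ hxy ih => exact hP hxy ih

theorem Subgroup.closure_inter_le {G : Type*} [Group G] (H : Subgroup G) (s : Set G) :
    closure ((H : Set G) ∩ s) ≤ H :=
  (closure_le _).2 Set.inter_subset_left

namespace pairGraph

variable {G : Type*} [Group G] {H : Subgroup G} {S : Set G}

theorem adj_iff {x y : G} :
    (pairGraph H S).Adj x y ↔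
      x ≠ y ∧ ((x ∈ H ∧ x⁻¹ * y ∈ S) ∨ (y ∈ H ∧ y⁻¹ * x ∈ S)) := by
  simp only [pairGraph, SimpleGraph.fromRel_adj, SetLike.mem_coe]
  constructor
  · rintro ⟨hne, ⟨h, hh, s, hs, rfl, rfl⟩ | ⟨h, hh, s, hs, rfl, rfl⟩⟩
    · exact ⟨hne, .inl ⟨hh, by simpa using hs⟩⟩
    · exact ⟨hne, .inr ⟨hh, by simpa using hs⟩⟩
  · rintro ⟨hne, ⟨hx, hs⟩ | ⟨hy, hs⟩⟩
    · exact ⟨hne, .inl ⟨x, hx, _, hs, rfl, by group⟩⟩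
    · exact ⟨hne, .inr ⟨y, hy, _, hs, rfl, by group⟩⟩

theorem adj_mul {h s : G} (hS : (1 : G) ∉ S) (hh : h ∈ H) (hs : s ∈ S) :
    (pairGraph H S).Adj h (h * s) :=
  adj_iff.2 ⟨fun he => hS (by rwa [left_eq_mul.1 he] at hs), .inl ⟨hh, by simpa using hs⟩⟩

theorem adj_mul_left_iff {a x y : G} (ha : a ∈ H) :
    (pairGraph H S).Adj (a * x) (a * y) ↔ (pairGraph H S).Adj x y := by
  simp only [adj_iff, ne_eq, mul_right_inj, mul_inv_rev, ← mul_assoc,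
    inv_mul_cancel_right, Subgroup.mul_mem_cancel_left H ha]

theorem reachable_mul_left {a x y : G} (ha : a ∈ H) (hxy : (pairGraph H S).Reachable x y) :
    (pairGraph H S).Reachable (a * x) (a * y) :=
  hxy.map ⟨(a * ·), (adj_mul_left_iff ha).2⟩

theorem reachable_one_of_mem_closure (hS : (1 : G) ∉ S) {g : G}
    (hg : g ∈ Subgroup.closure ((H : Set G) ∩ (S * S⁻¹))) :
    (pairGraph H S).Reachable 1 g := by
  have hle := H.closure_inter_le (S * S⁻¹)
  induction hg using Subgroup.closure_induction with
  | mem x hx =>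
    obtain ⟨hxH, s, hs, t, ht, rfl⟩ := hx
    have h1s : (pairGraph H S).Adj 1 s := by simpa using adj_mul hS H.one_mem hs
    have hsts : (pairGraph H S).Adj (s * t) s := by
      simpa using adj_mul hS hxH (Set.mem_inv.1 ht)
    exact h1s.reachable.trans hsts.reachable.symm
  | one => rfl
  | mul a b ha _ iha ihb => exact iha.trans (by simpa using reachable_mul_left (hle ha) ihb)
  | inv a ha iha => simpa using (reachable_mul_left (H.inv_mem (hle ha)) iha).symm

theorem reachable_one (hS : (1 : G) ∉ S)
    (hK : Subgroup.closure ((H : Set G) ∩ (S * S⁻¹)) = H)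
    (hrep : ∀ x : G, x ∉ H → ∃ s ∈ S, s * x⁻¹ ∈ H) (x : G) :
    (pairGraph H S).Reachable 1 x := by
  by_cases hx : x ∈ H
  · exact reachable_one_of_mem_closure hS (hK.ge hx)
  · obtain ⟨s, hs, hsx⟩ := hrep x hx
    have hxs : x * s⁻¹ ∈ H := by simpa using H.inv_mem hsx
    have hadj : (pairGraph H S).Adj (x * s⁻¹) x := by simpa using adj_mul hS hxs hs
    exact (reachable_one_of_mem_closure hS (hK.ge hxs)).trans hadj.reachable

theorem mem_union_mul_of_adj (hSH : Disjoint S (H : Set G)) {K : Subgroup G} (hKH : K ≤ H)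
    (hK : (H : Set G) ∩ (S * S⁻¹) ⊆ K) ⦃x y : G⦄ (hxy : (pairGraph H S).Adj x y)
    (hx : x ∈ (K : Set G) ∪ K * S) : y ∈ (K : Set G) ∪ K * S := by
  obtain ⟨-, ⟨hxH, hs⟩ | ⟨hyH, hs⟩⟩ := adj_iff.1 hxy
  · refine .inr ⟨x, ?_, _, hs, mul_inv_cancel_left x y⟩
    obtain hxK | ⟨k, hk, t, ht, rfl⟩ := hx
    · exact hxK
    · exact absurd ((H.mul_mem_cancel_left (hKH hk)).1 hxH) (hSH.notMem_of_mem_left ht)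
  · obtain hxK | ⟨k, hk, t, ht, rfl⟩ := hx
    · exact absurd ((H.mul_mem_cancel_left hyH).1 (by simpa using hKH hxK))
        (hSH.notMem_of_mem_left hs)
    · have hts : t * (y⁻¹ * (k * t))⁻¹ ∈ (H : Set G) ∩ (S * S⁻¹) :=
        ⟨by simpa [mul_assoc] using H.mul_mem (H.inv_mem (hKH hk)) hyH,
          Set.mul_mem_mul ht (Set.inv_mem_inv.2 hs)⟩
      exact .inl (by simpa [mul_assoc] using K.mul_mem hk (hK hts))

theorem mem_closure_union_mul_of_connected (hSH : Disjoint S (H : Set G))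
    (hconn : (pairGraph H S).Connected) (v : G) :
    v ∈ (Subgroup.closure ((H : Set G) ∩ (S * S⁻¹)) : Set G) ∪
      Subgroup.closure ((H : Set G) ∩ (S * S⁻¹)) * S :=
  (hconn.preconnected 1 v).of_adj_imp
    (mem_union_mul_of_adj hSH (H.closure_inter_le _) Subgroup.subset_closure)
    (.inl (Subgroup.one_mem _))

end pairGraph

theorem pairGraph_connected_iff_of_disjoint_general {G : Type*} [Group G]
    (H : Subgroup G) (S : Set G) (hSH : S ∩ (H : Set G) = ∅) :
    (pairGraph H S).Connected ↔
      (Subgroup.closure ((H : Set G) ∩ (S * S⁻¹)) = H ∧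
        ∀ x : G, x ∉ H → ∃ s ∈ S, s * x⁻¹ ∈ H) := by
  have hdisj : Disjoint S (H : Set G) := Set.disjoint_iff_inter_eq_empty.2 hSH
  have hKH := H.closure_inter_le (S * S⁻¹)
  constructor
  · intro hconn
    have hmem := pairGraph.mem_closure_union_mul_of_connected hdisj hconn
    refine ⟨le_antisymm hKH fun h hh => ?_, fun x hx => ?_⟩
    · obtain hhK | ⟨k, hk, s, hs, rfl⟩ := hmem h
      · exact hhK
      · exact absurd ((H.mul_mem_cancel_left (hKH hk)).1 hh) (hdisj.notMem_of_mem_left hs)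
    · obtain hxK | ⟨k, hk, s, hs, rfl⟩ := hmem x
      · exact absurd (hKH hxK) hx
      · exact ⟨s, hs, by simpa using H.inv_mem (hKH hk)⟩
  · rintro ⟨hK, hrep⟩
    have h1S : (1 : G) ∉ S := hdisj.notMem_of_mem_right H.one_mem
    exact (SimpleGraph.connected_iff_exists_forall_reachable _).2
      ⟨1, pairGraph.reachable_one h1S hK hrep⟩

/-- if `S ∩ H = ∅`, the pair graph is connected iff
`⟨H ∩ S·S⁻¹⟩ = H` and `S` contains a representative of every right coset of
`H` other than `H` itself. -/
theorem pairGraph_connected_iff_of_disjoint {G : Type*} [Group G] [Fintype G]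
    (H : Subgroup G) (S : Set G) (hSH : S ∩ (H : Set G) = ∅) :
    (pairGraph H S).Connected ↔
      (Subgroup.closure ((H : Set G) ∩ (S * S⁻¹)) = H ∧
        ∀ x : G, x ∉ H → ∃ s ∈ S, s * x⁻¹ ∈ H) :=
  pairGraph_connected_iff_of_disjoint_general H S hSH
end

section
/- Let U = ⟨H ∩ ((S∩H) ∪ S_O S_O⁻¹)⟩ where S_O = S \ H. The connected component of the identity in G(G,H,S) has vertex set U ∪ (⋃_{s ∈ S_O} U s). Every other connected component is either hΓ_e for some h ∈ H (a left translate of the identity component) or a single isolated vertex {x} with x ∈ G \ H. -/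
open scoped Pointwise Classical

/-!
Left multiplication by an element of `H` is an automorphism of the pair graph, so the vertices
of `H` reachable from `1` form a subgroup. It contains the generators of `U`: an element
`s * t⁻¹ ∈ H` with `s, t ∈ S \ H` is joined to `1` through their common neighbour `s`. Conversely
`U ∪ ⋃ U s` is closed under adjacency, because a vertex outside `H` has all its neighbours in `H`,
reached by stepping back along an element of `S \ H`. A vertex outside `H` is thus either
isolated or adjacent to some `h ∈ H`, and then its component is `h Γ_e`.
-/

theorem SimpleGraph.Reachable.mem_of_adj_closed {V : Type*} {Γ : SimpleGraph V} {T : Set V}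
    (hT : ∀ x ∈ T, ∀ y, Γ.Adj x y → y ∈ T) {x y : V} (hx : x ∈ T) (h : Γ.Reachable x y) :
    y ∈ T := by
  rw [SimpleGraph.reachable_iff_reflTransGen] at h
  induction h with
  | refl => exact hx
  | tail _ hadj ih => exact hT _ ih _ hadj

section PairGraph

variable {G : Type*} [Group G] {H : Subgroup G} {S : Set G}

theorem pairGraph_adj {x y : G} :
    (pairGraph H S).Adj x y ↔ x ≠ y ∧ (x ∈ H ∧ x⁻¹ * y ∈ S ∨ y ∈ H ∧ y⁻¹ * x ∈ S) := by
  have edge_iff : ∀ a b : G, (∃ h ∈ (H : Set G), ∃ s ∈ S, a = h ∧ b = h * s) ↔ a ∈ H ∧ a⁻¹ * b ∈ S :=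
    fun a b => ⟨by rintro ⟨h, hH, s, hs, rfl, rfl⟩; simpa using And.intro hH hs,
      fun ⟨ha, hab⟩ => ⟨a, ha, a⁻¹ * b, hab, rfl, by group⟩⟩
  simp only [pairGraph, SimpleGraph.fromRel_adj, edge_iff]

theorem pairGraph_adj_mul_left {a x y : G} (ha : a ∈ H) (h : (pairGraph H S).Adj x y) :
    (pairGraph H S).Adj (a * x) (a * y) := by
  simpa [pairGraph_adj, mul_assoc, H.mul_mem_cancel_left ha] using h

theorem pairGraph_reachable_mul_left {a x y : G} (ha : a ∈ H)
    (h : (pairGraph H S).Reachable x y) : (pairGraph H S).Reachable (a * x) (a * y) := by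
  rw [SimpleGraph.reachable_iff_reflTransGen] at h ⊢
  exact h.lift (a * ·) fun _ _ => pairGraph_adj_mul_left ha

theorem pairGraph_adj_of_notMem {x y : G} (hx : x ∉ H) (h : (pairGraph H S).Adj x y) :
    y ∈ H ∧ y⁻¹ * x ∈ S \ (H : Set G) := by
  obtain ⟨-, ⟨hxH, -⟩ | ⟨hy, hs⟩⟩ := pairGraph_adj.mp h
  · exact absurd hxH hx
  · exact ⟨hy, hs, fun hs' => hx (by simpa using H.mul_mem hy hs')⟩

theorem pairGraph_adj_mul_of_notMem {h s : G} (hh : h ∈ H) (hs : s ∈ S \ (H : Set G)) :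
    (pairGraph H S).Adj h (h * s) :=
  pairGraph_adj.mpr ⟨fun he => hs.2 (left_eq_mul.mp he ▸ H.one_mem),
    .inl ⟨hh, by simpa using hs.1⟩⟩

theorem setOf_pairGraph_reachable_of_mem {h : G} (hh : h ∈ H) :
    {y | (pairGraph H S).Reachable h y} =
      (fun g => h * g) '' {y | (pairGraph H S).Reachable 1 y} := by
  ext y
  refine ⟨fun hy => ⟨h⁻¹ * y, ?_, by group⟩, ?_⟩
  · simpa using pairGraph_reachable_mul_left (H.inv_mem hh) hy
  · rintro ⟨z, hz, rfl⟩
    simpa using pairGraph_reachable_mul_left hh hz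

theorem setOf_pairGraph_reachable_of_forall_not_adj {x : G}
    (hx : ∀ y, ¬(pairGraph H S).Adj x y) : {y | (pairGraph H S).Reachable x y} = {x} :=
  Set.eq_singleton_iff_unique_mem.mpr ⟨SimpleGraph.Reachable.refl x, fun _ hy =>
    hy.mem_of_adj_closed (T := {x}) (by rintro _ rfl y hxy; exact absurd hxy (hx y)) rfl⟩

variable (H S) in
def pairGraphReachableSubgroup : Subgroup G where
  carrier := {u | u ∈ H ∧ (pairGraph H S).Reachable 1 u}
  one_mem' := ⟨H.one_mem, .refl 1⟩
  mul_mem' := fun {a _} ⟨ha, hra⟩ ⟨hb, hrb⟩ =>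
    ⟨H.mul_mem ha hb, hra.trans (by simpa using pairGraph_reachable_mul_left ha hrb)⟩
  inv_mem' := fun {a} ⟨ha, hra⟩ =>
    ⟨H.inv_mem ha, by simpa using (pairGraph_reachable_mul_left (H.inv_mem ha) hra).symm⟩

variable (H S) in
def pairGraphGenerators : Set G :=
  (H : Set G) ∩ ((S ∩ (H : Set G)) ∪ ((S \ (H : Set G)) * (S \ (H : Set G))⁻¹))

theorem pairGraph_reachable_one_of_mem_generators {g : G} (hg : g ∈ pairGraphGenerators H S) :
    (pairGraph H S).Reachable 1 g := by
  obtain ⟨hgH, ⟨hgS, -⟩ | ⟨s, hs, t, ht, rfl⟩⟩ := hg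
  · by_cases hg1 : g = 1
    · subst hg1
      exact .refl 1
    · exact (pairGraph_adj.mpr ⟨Ne.symm hg1, .inl ⟨H.one_mem, by simpa⟩⟩).reachable
  · have h1s : (pairGraph H S).Adj 1 s := by
      simpa using pairGraph_adj_mul_of_notMem H.one_mem hs
    have hgs : (pairGraph H S).Adj (s * t) s := by
      simpa using pairGraph_adj_mul_of_notMem hgH ht
    exact h1s.reachable.trans hgs.reachable.symm

theorem closure_pairGraphGenerators_le :
    Subgroup.closure (pairGraphGenerators H S) ≤ pairGraphReachableSubgroup H S :=
  (Subgroup.closure_le _).mpr fun _ hg => ⟨hg.1, pairGraph_reachable_one_of_mem_generators hg⟩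

theorem pairGraph_adj_mem_or_mul_inv_mem {U : Subgroup G} (hUH : U ≤ H)
    (hgen : pairGraphGenerators H S ⊆ U) {a y : G}
    (ha : a ∈ U ∨ ∃ t ∈ S \ (H : Set G), a * t⁻¹ ∈ U) (hay : (pairGraph H S).Adj a y) :
    y ∈ U ∨ ∃ t ∈ S \ (H : Set G), y * t⁻¹ ∈ U := by
  rcases ha with haU | ⟨t, ht, hu⟩
  · have haH := hUH haU
    obtain ⟨-, ⟨-, hs⟩ | ⟨hy, hs⟩⟩ := pairGraph_adj.mp hay
    · by_cases hsH : a⁻¹ * y ∈ H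
      · left
        simpa using U.mul_mem haU (hgen ⟨hsH, .inl ⟨hs, hsH⟩⟩)
      · exact .inr ⟨a⁻¹ * y, ⟨hs, hsH⟩, by simpa using haU⟩
    · have hsH : y⁻¹ * a ∈ H := H.mul_mem (H.inv_mem hy) haH
      left
      simpa using U.mul_mem haU (U.inv_mem (hgen ⟨hsH, .inl ⟨hs, hsH⟩⟩))
  · have haH : a ∉ H := fun haH => ht.2 (by simpa using H.mul_mem (H.inv_mem (hUH hu)) haH)
    obtain ⟨hy, hs⟩ := pairGraph_adj_of_notMem haH hay
    have hgen' : (a * t⁻¹)⁻¹ * y ∈ pairGraphGenerators H S := by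
      refine ⟨H.mul_mem (H.inv_mem (hUH hu)) hy, .inr ?_⟩
      convert Set.mul_mem_mul ht (Set.inv_mem_inv.mpr hs) using 1
      group
    left
    simpa [mul_assoc] using U.mul_mem hu (hgen hgen')

theorem setOf_pairGraph_reachable_one {U : Subgroup G}
    (hU : U = Subgroup.closure (pairGraphGenerators H S)) :
    {x | (pairGraph H S).Reachable 1 x} =
      (U : Set G) ∪ ⋃ t ∈ S \ (H : Set G), (U : Set G) * {t} := by
  have hUR : U ≤ pairGraphReachableSubgroup H S := hU ▸ closure_pairGraphGenerators_le
  have hUH : U ≤ H := fun _ hu => (hUR hu).1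
  ext x
  simp only [Set.mem_ofPred_eq, Set.mem_union, SetLike.mem_coe, Set.mem_iUnion, Set.mul_singleton,
    Set.image_mul_right, Set.mem_preimage, exists_prop]
  constructor
  · exact fun hx => hx.mem_of_adj_closed (T := {x | x ∈ U ∨ _})
      (fun _ ha _ => pairGraph_adj_mem_or_mul_inv_mem hUH (hU ▸ Subgroup.subset_closure) ha)
      (.inl U.one_mem)
  · rintro (hxU | ⟨t, ht, hu⟩)
    · exact (hUR hxU).2
    · simpa using (hUR hu).2.trans (pairGraph_adj_mul_of_notMem (hUH hu) ht).reachable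

end PairGraph

theorem pairGraph_components_general {G : Type*} [Group G]
    (H : Subgroup G) (S : Set G)
    (U : Subgroup G)
    (hU : U = Subgroup.closure ((H : Set G) ∩
      ((S ∩ (H : Set G)) ∪ ((S \ (H : Set G)) * (S \ (H : Set G))⁻¹)))) :
    {x : G | (pairGraph H S).Reachable 1 x} =
        (U : Set G) ∪ ⋃ s ∈ S \ (H : Set G), (U : Set G) * {s} ∧
    ∀ x : G,
      (∃ h ∈ H, {y : G | (pairGraph H S).Reachable x y} =
          (fun g => h * g) '' {y : G | (pairGraph H S).Reachable 1 y}) ∨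
      (x ∉ H ∧ {y : G | (pairGraph H S).Reachable x y} = {x}) := by
  refine ⟨setOf_pairGraph_reachable_one hU, fun x => ?_⟩
  by_cases hx : x ∈ H
  · exact .inl ⟨x, hx, setOf_pairGraph_reachable_of_mem hx⟩
  by_cases hiso : ∀ y, ¬(pairGraph H S).Adj x y
  · exact .inr ⟨hx, setOf_pairGraph_reachable_of_forall_not_adj hiso⟩
  obtain ⟨y, hxy⟩ := not_forall_not.mp hiso
  have hy := (pairGraph_adj_of_notMem hx hxy).1
  refine .inl ⟨y, hy, ?_⟩
  rw [← setOf_pairGraph_reachable_of_mem hy]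
  ext z
  exact ⟨hxy.reachable.symm.trans, hxy.reachable.trans⟩

/-- with `U = ⟨H ∩ ((S∩H) ∪ S_O S_O⁻¹)⟩`, the identity component
of the pair graph is `U ∪ ⋃_{s ∈ S_O} U s`; every other component is a left
translate `h Γ_e` with `h ∈ H`, or an isolated vertex `{x}`, `x ∈ G \ H`. -/
theorem pairGraph_components {G : Type*} [Group G] [Fintype G]
    (H : Subgroup G) (S : Set G)
    (hsym : (S ∩ (H : Set G))⁻¹ = S ∩ (H : Set G))
    (U : Subgroup G)
    (hU : U = Subgroup.closure ((H : Set G) ∩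
      ((S ∩ (H : Set G)) ∪ ((S \ (H : Set G)) * (S \ (H : Set G))⁻¹)))) :
    {x : G | (pairGraph H S).Reachable 1 x} =
        (U : Set G) ∪ ⋃ s ∈ S \ (H : Set G), (U : Set G) * {s} ∧
    ∀ x : G,
      (∃ h ∈ H, {y : G | (pairGraph H S).Reachable x y} =
          (fun g => h * g) '' {y : G | (pairGraph H S).Reachable 1 y}) ∨
      (x ∉ H ∧ {y : G | (pairGraph H S).Reachable x y} = {x}) :=
  pairGraph_components_general H S U hU
end
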